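/- arXiv:2108.04523 — 5 statements merged into one kernel-verified Lean document; each statement's English description precedes it below -/
import Mathlib

section
/- Let Σ be an alphabet, Σ_1,…,Σ_n ⊆ Σ subalphabets with projections P_i, and K ⊆ L ⊆ Σ* languages. If the OCT condition holds, then K is jointly observable (JO). -/
/-- Projection onto subalphabet `Sub i`: keep only the letters lying in `Sub i`. -/
def P {α : Type*} {n : ℕ} (Sub : Fin n → Set α) [∀ i, DecidablePred (· ∈ Sub i)]
    (i : Fin n) (ρ : List α) : List α :=
  ρ.filter (fun x => decide (x ∈ Sub i))

/-- Agent `i` can tell whether `ρ` is good or bad. -/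
def cantell {α : Type*} {n : ℕ} (Sub : Fin n → Set α) [∀ i, DecidablePred (· ∈ Sub i)]
    (K L : Set (List α)) (i : Fin n) (ρ : List α) : Prop :=
  (ρ ∈ K → ¬ ∃ ρ' ∈ L \ K, P Sub i ρ = P Sub i ρ') ∧
  (ρ ∈ L \ K → ¬ ∃ ρ' ∈ K, P Sub i ρ = P Sub i ρ')

/-- The "at least one can tell" (OCT) condition. -/
def OCT {α : Type*} {n : ℕ} (Sub : Fin n → Set α) [∀ i, DecidablePred (· ∈ Sub i)]
    (K L : Set (List α)) : Prop :=
  ∀ ρ ∈ L, ∃ i : Fin n, cantell Sub K L i ρ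

/-- OCT implies joint observability (JO). -/
theorem OCT_implies_JO {α : Type*} {n : ℕ} (hn : 0 < n)
    (Sub : Fin n → Set α) [∀ i, DecidablePred (· ∈ Sub i)]
    (K L : Set (List α)) (hKL : K ⊆ L)
    (hOCT : OCT Sub K L) :
    ∃ f : (Fin n → List α) → Fin 2,
      ∀ ρ ∈ L, (ρ ∈ K ↔ f (fun i => P Sub i ρ) = 1) := by
  classical
  refine ⟨fun w => if ∃ i : Fin n, ∃ ρ' ∈ K, cantell Sub K L i ρ' ∧ P Sub i ρ' = w i
    then 1 else 0, ?_⟩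
  intro ρ hρ
  constructor
  · intro hρK
    obtain ⟨i, hi⟩ := hOCT ρ hρ
    exact if_pos ⟨i, ρ, hρK, hi, rfl⟩
  · intro hf
    by_contra hρK
    simp only at hf
    rw [if_neg] at hf
    · exact absurd hf (by decide)
    · rintro ⟨i, ρ', hρ'K, hct, hP⟩
      exact hct.1 hρ'K ⟨ρ, ⟨hρ, hρK⟩, hP⟩
end

section
/- JO does not in general imply OCT: there exist an alphabet Σ, subalphabets Σ_1, Σ_2 ⊆ Σ, and regular languages K ⊆ L ⊆ Σ* such that K is jointly observable (JO) with respect to L and Σ_1, Σ_2, but the OCT condition fails. Concretely, this holds for Σ = {a,b}, Σ_1 = {a}, Σ_2 = {b}, K = (ab)*, and L = (ab)*·b*. -/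
open scoped Computability

/-- The letter `a`. -/
abbrev a : Bool := true
/-- The letter `b`. -/
abbrev b : Bool := false

/-- `K = (ab)*`. -/
def K0 : Set (List Bool) := (({[a, b]} : Language Bool)∗ : Language Bool)

/-- `L = (ab)* · b*`. -/
def L0 : Set (List Bool) :=
  ((({[a, b]} : Language Bool)∗ * ({[b]} : Language Bool)∗ : Language Bool))

/-- Projection onto `Σ₁ = {a}`. -/
def P1 (ρ : List Bool) : List Bool := ρ.filter (fun x => decide (x ∈ ({a} : Set Bool)))

/-- Projection onto `Σ₂ = {b}`. -/
def P2 (ρ : List Bool) : List Bool := ρ.filter (fun x => decide (x ∈ ({b} : Set Bool)))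

/-- Observer with projection `Pi` can tell whether `ρ` is good or bad. -/
def cantell0 (Pi : List Bool → List Bool) (ρ : List Bool) : Prop :=
  (ρ ∈ K0 → ¬ ∃ ρ' ∈ L0 \ K0, Pi ρ = Pi ρ') ∧
  (ρ ∈ L0 \ K0 → ¬ ∃ ρ' ∈ K0, Pi ρ = Pi ρ')

lemma P1_append (u v : List Bool) : P1 (u ++ v) = P1 u ++ P1 v := by
  simp [P1, List.filter_append]

lemma P2_append (u v : List Bool) : P2 (u ++ v) = P2 u ++ P2 v := by
  simp [P2, List.filter_append]

lemma K0_len {ρ : List Bool} (h : ρ ∈ K0) : (P1 ρ).length = (P2 ρ).length := by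
  change ρ ∈ (({[a, b]} : Language Bool)∗ : Language Bool) at h
  rw [Language.mem_kstar] at h
  obtain ⟨S, rfl, hS⟩ := h
  induction S with
  | nil => simp [P1, P2]
  | cons x xs ih =>
    have hx : x = [a, b] := hS x (by simp)
    have := ih (fun y hy => hS y (by simp [hy]))
    simp only [List.flatten_cons, P1_append, P2_append, List.length_append, this, hx]
    simp [P1, P2]

lemma bstar_char {v : List Bool} (h : v ∈ (({[b]} : Language Bool)∗ : Language Bool)) :
    P1 v = [] ∧ P2 v = v := by
  rw [Language.mem_kstar] at h
  obtain ⟨S, rfl, hS⟩ := h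
  induction S with
  | nil => simp [P1, P2]
  | cons x xs ih =>
    have hx : x = [b] := hS x (by simp)
    have := ih (fun y hy => hS y (by simp [hy]))
    simp only [List.flatten_cons, P1_append, P2_append, this.1, this.2, hx]
    constructor <;> simp [P1, P2]

lemma key {ρ : List Bool} (hρ : ρ ∈ L0) :
    ρ ∈ K0 ↔ (P1 ρ).length = (P2 ρ).length := by
  constructor
  · exact K0_len
  · intro hlen
    change ρ ∈ ((({[a, b]} : Language Bool)∗ * ({[b]} : Language Bool)∗ : Language Bool)) at hρ
    rw [Language.mem_mul] at hρ
    obtain ⟨u, hu, v, hv, rfl⟩ := hρ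
    obtain ⟨h1, h2⟩ := bstar_char hv
    have hul := K0_len hu
    rw [P1_append, P2_append, h1, h2, List.length_append, List.length_append, List.length_nil, hul] at hlen
    have : v = [] := by
      have : v.length = 0 := by omega
      simpa using this
    subst this
    have hu' : u ∈ K0 := hu
    simpa using hu'

/-- for this concrete instance, JO holds but OCT fails. -/
theorem jo_not_imp_oct :
    (∃ f : List Bool × List Bool → Fin 2,
        ∀ ρ ∈ L0, (ρ ∈ K0 ↔ f (P1 ρ, P2 ρ) = 1)) ∧
    ¬ (∀ ρ ∈ L0, cantell0 P1 ρ ∨ cantell0 P2 ρ) := by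
  constructor
  · refine ⟨fun p => if p.1.length = p.2.length then 1 else 0, fun ρ hρ => ?_⟩
    rw [key hρ]
    constructor
    · intro h; simp [h]
    · intro h
      by_contra hc
      simp [hc] at h
  · intro h
    have hab : [a, b] ∈ K0 := by
      show _ ∈ (({[a, b]} : Language Bool)∗ : Language Bool)
      rw [Language.mem_kstar]
      exact ⟨[[a, b]], by simp, fun y hy => by simp at hy; subst hy; rfl⟩
    have habL : [a, b] ∈ L0 := by
      show _ ∈ ((({[a, b]} : Language Bool)∗ * ({[b]} : Language Bool)∗ : Language Bool))
      rw [Language.mem_mul]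
      exact ⟨[a, b], hab, [], Language.nil_mem_kstar _, by simp⟩
    -- ρ' = [a, b, b] : in L0 \ K0, P1 = [a] = P1 [a,b]
    have h1 : [a, b, b] ∈ L0 := by
      show _ ∈ ((({[a, b]} : Language Bool)∗ * ({[b]} : Language Bool)∗ : Language Bool))
      rw [Language.mem_mul]
      refine ⟨[a, b], hab, [b], ?_, by simp⟩
      rw [Language.mem_kstar]
      exact ⟨[[b]], by simp, fun y hy => by simp at hy; subst hy; rfl⟩
    have h1k : [a, b, b] ∉ K0 := by
      intro hk
      have := K0_len hk
      simp [P1, P2] at this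
    -- ρ' = [b] : in L0 \ K0, P2 = [b] = P2 [a,b]
    have h2 : [b] ∈ L0 := by
      show _ ∈ ((({[a, b]} : Language Bool)∗ * ({[b]} : Language Bool)∗ : Language Bool))
      rw [Language.mem_mul]
      refine ⟨[], Language.nil_mem_kstar _, [b], ?_, by simp⟩
      rw [Language.mem_kstar]
      exact ⟨[[b]], by simp, fun y hy => by simp at hy; subst hy; rfl⟩
    have h2k : [b] ∉ K0 := by
      intro hk
      have := K0_len hk
      simp [P1, P2] at this
    rcases h [a, b] habL with ⟨hc, _⟩ | ⟨hc, _⟩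
    · exact hc hab ⟨[a, b, b], ⟨h1, h1k⟩, by simp [P1]⟩
    · exact hc hab ⟨[b], ⟨h2, h2k⟩, by simp [P2]⟩
end

section
/- For Σ = {a,b}, Σ_1 = {a}, Σ_2 = {b}, K = (ab)*, and L = (ab)*·b*, the language K is jointly observable (JO) with respect to L and Σ_1, Σ_2: for every ρ ∈ L, ρ ∈ K if and only if the number of a's in ρ equals the number of b's in ρ, and hence whether ρ ∈ K is a function of (P_1(ρ), P_2(ρ)). -/
open scoped Computability

lemma aux1 (L : List (List Bool)) (h : ∀ y ∈ L, y = [a,b]) :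
    L.flatten.count a = L.flatten.count b := by
  induction L with
  | nil => simp
  | cons x xs ih =>
    have hx : x = [a,b] := h x (by simp)
    simp only [List.flatten_cons, List.count_append, hx,
      ih (fun y hy => h y (by simp [hy]))]
    simp [List.count_cons]

lemma aux2 (L : List (List Bool)) (h : ∀ y ∈ L, y = [b]) :
    ∃ n, L.flatten = List.replicate n b := by
  induction L with
  | nil => exact ⟨0, rfl⟩
  | cons x xs ih =>
    obtain ⟨n, hn⟩ := ih (fun y hy => h y (by simp [hy]))
    exact ⟨n+1, by simp [h x (by simp), hn, List.replicate_succ]⟩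

lemma aux3 (ρ : List Bool) :
    (ρ.filter (fun x => decide (x ∈ ({a} : Set Bool)))).length = ρ.count a := by
  induction ρ with
  | nil => rfl
  | cons x xs ih => cases x <;> simp_all [List.count_cons]

lemma aux4 (ρ : List Bool) :
    (ρ.filter (fun x => decide (x ∈ ({b} : Set Bool)))).length = ρ.count b := by
  induction ρ with
  | nil => rfl
  | cons x xs ih => cases x <;> simp_all [List.count_cons]

lemma main1 : ∀ ρ ∈ L0, (ρ ∈ K0 ↔ ρ.count a = ρ.count b) := by
  intro ρ hρ
  constructor
  · intro hK
    obtain ⟨L, rfl, h⟩ := Language.mem_kstar.mp hK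
    exact aux1 L (fun y hy => Set.mem_singleton_iff.mp (h y hy))
  · intro hc
    obtain ⟨u, hu, v, hv, rfl⟩ := Language.mem_mul.mp hρ
    obtain ⟨M, rfl, hM⟩ := Language.mem_kstar.mp hv
    obtain ⟨n, hn⟩ := aux2 M (fun y hy => Set.mem_singleton_iff.mp (hM y hy))
    obtain ⟨Lu, rfl, hLu⟩ := Language.mem_kstar.mp hu
    have h1 := aux1 Lu (fun y hy => Set.mem_singleton_iff.mp (hLu y hy))
    rw [hn] at hc
    simp only [List.count_append, h1, List.count_replicate] at hc
    have : n = 0 := by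
      rcases Nat.eq_zero_or_pos n with h0 | h0
      · exact h0
      · simp at hc; omega
    subst this
    have hK : Lu.flatten ∈ K0 := hu
    simpa [hn] using hK

lemma main2 : ∃ f : List Bool × List Bool → Fin 2,
    ∀ ρ ∈ L0, (ρ ∈ K0 ↔ f (P1 ρ, P2 ρ) = 1) := by
  refine ⟨fun p => if p.1.length = p.2.length then 1 else 0, fun ρ hρ => ?_⟩
  rw [main1 ρ hρ]
  simp only [P1, P2, aux3, aux4]
  constructor
  · intro h; simp [h]
  · intro h; by_contra hc; simp [hc] at h

/-- `K = (ab)*` is jointly observable w.r.t. `L = (ab)*·b*`, `Σ₁ = {a}`,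
`Σ₂ = {b}`: for every `ρ ∈ L`, `ρ ∈ K` iff the number of `a`'s equals the number of `b`'s,
and hence membership of `ρ` in `K` is a function of `(P1 ρ, P2 ρ)`. -/
theorem jo_holds_for_example :
    (∀ ρ ∈ L0, (ρ ∈ K0 ↔ ρ.count a = ρ.count b)) ∧
    (∃ f : List Bool × List Bool → Fin 2,
        ∀ ρ ∈ L0, (ρ ∈ K0 ↔ f (P1 ρ, P2 ρ) = 1)) := by
  exact ⟨main1, main2⟩
end

section
/- Let Σ be an alphabet, Σ_1,…,Σ_n ⊆ Σ subalphabets with projections P_i, and K ⊆ L ⊆ Σ* languages. The DESOCT condition holds if and only if the OCT condition holds. -/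
/-- The discrete-event systems OCT (DESOCT) condition. -/
def DESOCT {α : Type*} {n : ℕ} (Sub : Fin n → Set α) [∀ i, DecidablePred (· ∈ Sub i)]
    (K L : Set (List α)) : Prop :=
  ∀ (s : List α) (t : Fin n → List α),
    (∀ i : Fin n, P Sub i s = P Sub i (t i)) →
      (((∀ i : Fin n, t i ∈ K) ∧ s ∈ L → s ∈ K) ∧
       ((∀ i : Fin n, t i ∈ L \ K) ∧ s ∈ L → s ∉ K))

/-- The language-inclusion OCT (LANGOCT) condition. -/
def LANGOCT {α : Type*} {n : ℕ} (Sub : Fin n → Set α) [∀ i, DecidablePred (· ∈ Sub i)]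
    (K L : Set (List α)) : Prop :=
  ((⋂ i : Fin n, P Sub i ⁻¹' (P Sub i '' K)) ∩ L ⊆ K) ∧
  ((⋂ i : Fin n, P Sub i ⁻¹' (P Sub i '' (L \ K))) ∩ L ⊆ L \ K)

/-- DESOCT holds if and only if OCT holds. -/
theorem DESOCT_iff_OCT {α : Type*} {n : ℕ} (hn : 0 < n)
    (Sub : Fin n → Set α) [∀ i, DecidablePred (· ∈ Sub i)]
    (K L : Set (List α)) (hKL : K ⊆ L) :
    DESOCT Sub K L ↔ OCT Sub K L := by
  constructor
  · intro hD ρ hρ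
    by_contra hno
    push_neg at hno
    by_cases hK : ρ ∈ K
    · have hpick : ∀ i : Fin n, ∃ ρ' ∈ L \ K, P Sub i ρ = P Sub i ρ' := by
        intro i
        have := hno i
        unfold cantell at this
        by_contra hne
        exact this ⟨fun _ => hne, fun h => absurd hK h.2⟩
      choose t ht hPt using hpick
      exact (hD ρ t hPt).2 ⟨ht, hρ⟩ hK
    · have hpick : ∀ i : Fin n, ∃ ρ' ∈ K, P Sub i ρ = P Sub i ρ' := by
        intro i
        have := hno i
        unfold cantell at this
        by_contra hne
        exact this ⟨fun h => absurd h hK, fun _ => hne⟩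
      choose t ht hPt using hpick
      exact hK ((hD ρ t hPt).1 ⟨ht, hρ⟩)
  · intro hO s t hP
    constructor
    · rintro ⟨htK, hsL⟩
      obtain ⟨i, hi⟩ := hO s hsL
      by_contra hsK
      exact hi.2 ⟨hsL, hsK⟩ ⟨t i, htK i, hP i⟩
    · rintro ⟨htLK, hsL⟩ hsK
      obtain ⟨i, hi⟩ := hO s hsL
      exact hi.1 hsK ⟨t i, htLK i, hP i⟩
end

section
/- Let Σ be an alphabet, Σ_1,…,Σ_n ⊆ Σ subalphabets with projections P_i, and K ⊆ L ⊆ Σ* languages. The OCT condition holds if and only if the LANGOCT condition holds, i.e., iff (⋂_{i=1,…,n} P_i^{-1}(P_i(K))) ∩ L ⊆ K and (⋂_{i=1,…,n} P_i^{-1}(P_i(L \ K))) ∩ L ⊆ L \ K. -/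
/-- OCT holds if and only if LANGOCT holds. -/
theorem OCT_iff_LANGOCT {α : Type*} {n : ℕ} (hn : 0 < n)
    (Sub : Fin n → Set α) [∀ i, DecidablePred (· ∈ Sub i)]
    (K L : Set (List α)) (hKL : K ⊆ L) :
    OCT Sub K L ↔
      (((⋂ i : Fin n, P Sub i ⁻¹' (P Sub i '' K)) ∩ L ⊆ K) ∧
       ((⋂ i : Fin n, P Sub i ⁻¹' (P Sub i '' (L \ K))) ∩ L ⊆ L \ K)) := by
  constructor
  · intro hoct
    constructor
    · rintro ρ ⟨hint, hL⟩
      obtain ⟨i, hi1, hi2⟩ := hoct ρ hL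
      by_contra hK
      obtain ⟨ρ', hρ'K, hPeq⟩ := Set.mem_iInter.1 hint i
      exact hi2 ⟨hL, hK⟩ ⟨ρ', hρ'K, hPeq.symm⟩
    · rintro ρ ⟨hint, hL⟩
      obtain ⟨i, hi1, hi2⟩ := hoct ρ hL
      refine ⟨hL, fun hK => ?_⟩
      obtain ⟨ρ', hρ', hPeq⟩ := Set.mem_iInter.1 hint i
      exact hi1 hK ⟨ρ', hρ', hPeq.symm⟩
  · rintro ⟨h1, h2⟩ ρ hL
    by_contra hno
    push_neg at hno
    by_cases hK : ρ ∈ K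
    · have : ∀ i : Fin n, ∃ ρ' ∈ L \ K, P Sub i ρ = P Sub i ρ' := by
        intro i
        have := hno i
        unfold cantell at this
        by_contra hc
        exact this ⟨fun _ => hc, fun h => absurd hK h.2⟩
      have hmem : ρ ∈ ⋂ i : Fin n, P Sub i ⁻¹' (P Sub i '' (L \ K)) := by
        refine Set.mem_iInter.2 fun i => ?_
        obtain ⟨ρ', hρ', heq⟩ := this i
        exact ⟨ρ', hρ', heq.symm⟩
      exact (h2 ⟨hmem, hL⟩).2 hK
    · have : ∀ i : Fin n, ∃ ρ' ∈ K, P Sub i ρ = P Sub i ρ' := by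
        intro i
        have := hno i
        unfold cantell at this
        by_contra hc
        exact this ⟨fun h => absurd h hK, fun _ => hc⟩
      have hmem : ρ ∈ ⋂ i : Fin n, P Sub i ⁻¹' (P Sub i '' K) := by
        refine Set.mem_iInter.2 fun i => ?_
        obtain ⟨ρ', hρ', heq⟩ := this i
        exact ⟨ρ', hρ', heq.symm⟩
      exact hK (h1 ⟨hmem, hL⟩)
end
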